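/- arXiv:1309.6686 — 2 statements merged into one kernel-verified Lean document; each statement's English description precedes it below -/
import Mathlib

section
/- For every finite poset P, as n → ∞, Pa*(n, P) is asymptotically equal to (|P| / c*(P)) · C(n, ⌊n/2⌋); that is, Pa*(n,P) / C(n, ⌊n/2⌋) → |P| / c*(P). -/
/-- A strong embedding of a poset `P` into the Boolean lattice `B_n`:
an injective map such that `a < b` iff `f a ⊊ f b`. -/
def IsStrongEmbedding {P : Type*} [PartialOrder P] {n : ℕ} (f : P → Finset (Fin n)) : Prop :=
  Function.Injective f ∧ ∀ a b : P, a < b ↔ f a ⊂ f b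

/-- An induced copy of the poset `P` in `B_n`: the image of a strong embedding. -/
def IsInducedCopy (P : Type*) [PartialOrder P] [Fintype P] {n : ℕ}
    (C : Finset (Finset (Fin n))) : Prop :=
  ∃ f : P → Finset (Fin n), IsStrongEmbedding f ∧ C = Finset.image f Finset.univ


/-- Two families of subsets of `[n]` are unrelated if no member of one is comparable
(under inclusion) with a member of the other. -/
def Unrelated {n : ℕ} (F₁ F₂ : Finset (Finset (Fin n))) : Prop :=
  ∀ A ∈ F₁, ∀ B ∈ F₂, ¬ A ⊆ B ∧ ¬ B ⊆ A
/-- `F` is a union of pairwise unrelated induced copies of `P` in `B_n`. -/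
def IsUnionOfUnrelatedInducedCopies (P : Type*) [PartialOrder P] [Fintype P] {n : ℕ}
    (F : Finset (Finset (Fin n))) : Prop :=
  ∃ 𝒞 : Finset (Finset (Finset (Fin n))),
    (∀ C ∈ 𝒞, IsInducedCopy P C) ∧
    (∀ C₁ ∈ 𝒞, ∀ C₂ ∈ 𝒞, C₁ ≠ C₂ → Unrelated C₁ C₂) ∧
    F = 𝒞.sup id

/-- `Pa* P n`: the maximum size of a family of subsets of `[n]` that is a union of
pairwise unrelated induced copies of `P`. -/
noncomputable def PaStar (P : Type*) [PartialOrder P] [Fintype P] (n : ℕ) : ℕ :=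
  sSup {m | ∃ F : Finset (Finset (Fin n)), IsUnionOfUnrelatedInducedCopies P F ∧ F.card = m}

/-- The convex closure of a family `F` of subsets of `[n]`:
all `S` with `A ⊆ S ⊆ B` for some `A, B ∈ F`. -/
def convexClosure {n : ℕ} (F : Finset (Finset (Fin n))) : Finset (Finset (Fin n)) :=
  Finset.univ.filter (fun S => ∃ A ∈ F, ∃ B ∈ F, A ⊆ S ∧ S ⊆ B)

/-- `c*(P)`: the minimum size of the convex closure of the image of a strong embedding
of `P` into a Boolean lattice `B_k`, over all `k` and all strong embeddings. -/
noncomputable def closureNumStar (P : Type*) [PartialOrder P] [Fintype P] : ℕ :=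
  sInf {m | ∃ (k : ℕ) (f : P → Finset (Fin k)), IsStrongEmbedding f ∧
    (convexClosure (Finset.image f Finset.univ)).card = m}

/-!
Upper bound. A permutation of `[n]` is a maximal chain of `B_n`. No chain meets the convex
closures of two unrelated copies of `P`, and each closure has at least `c = c*(P)` members. If
one of them has size at least `3n/4`, it alone lies on a fraction `≥ c / C(n, n/2)` of all
chains; otherwise Bonferroni's inequality applies, since two comparable sets of size below `3n/4`
share at most a fraction `4/n` of the chains through the smaller one. So every copy owns a
fraction `(1 - 8c/n) · c / C(n, n/2)` of the chains, and there are at most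
`C(n, n/2) / c · n / (n - 8c)` copies.

Lower bound. Fix `f₀ : P → B_{k₀}` whose convex closure `D` has `c` members. Call a list of
embeddings good if no set of an earlier embedding lies below a set of a later one. From a good
list of `L` embeddings into `B_m`, gluing `f₀` with all of `B_m` and the sets of `B_{k₀} \ D` with
the given embeddings yields a good list of `2^m + (2^{k₀} - c) L` embeddings into `B_{k₀+m}`.
After `t` rounds, `c L ≥ 2^k - (2^{k₀} - c)^t` with `k = k₀ t`. Gluing the `i`-th embedding with
all sets of level `m/2 - L + i` of `B_m` gives `L · C(m, m/2 - L)` pairwise unrelated copies in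
`B_{k+m}`, and `C(m, m/2 - L) ~ C(m, m/2) ≥ C(k+m, (k+m)/2) / 2^k`.
-/

open Finset Nat

section PermCount

variable {α κ : Type*} [Fintype α] [DecidableEq α] [Fintype κ] [DecidableEq κ]

theorem card_perm_comp_eq {f g : α → κ}
    (h : ∀ c, Fintype.card {x // f x = c} = Fintype.card {y // g y = c}) :
    Fintype.card {σ : Equiv.Perm α // g ∘ σ = f} = ∏ c, (Fintype.card {x // f x = c})! := by
  let σ₀ : Equiv.Perm α := Equiv.ofFiberEquiv fun c => Fintype.equivOfCardEq (h c)
  have hσ₀ : g ∘ σ₀ = f := funext (Equiv.ofFiberEquiv_map _)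
  rw [← DomMulAct.stabilizer_card f]
  refine Fintype.card_congr (Equiv.subtypeEquiv (Equiv.mulLeft σ₀⁻¹) fun σ => ?_)
  rw [← hσ₀]
  constructor <;> intro h' <;> funext x <;> simpa using congrFun h' x

end PermCount

section Chains

variable {α : Type*} [DecidableEq α]

def chainLevel (S T : Finset α) (x : α) : Fin 3 :=
  if x ∈ S then 0 else if x ∈ T then 1 else 2

theorem chainLevel_eq_chainLevel_iff {S T S' T' : Finset α} (h : S ⊆ T) (h' : S' ⊆ T') {x y : α} :
    chainLevel S T x = chainLevel S' T' y ↔ (x ∈ S ↔ y ∈ S') ∧ (x ∈ T ↔ y ∈ T') := by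
  have := @h x; have := @h' y
  unfold chainLevel; split_ifs <;> simp_all

theorem card_chainLevel_fiber [Fintype α] {S T : Finset α} (h : S ⊆ T) (c : Fin 3) :
    Fintype.card {x // chainLevel S T x = c} = ![#S, #T - #S, Fintype.card α - #T] c := by
  rw [Fintype.card_subtype, ← card_compl, ← card_sdiff_of_subset h]
  match c with
  | 0 | 1 | 2 =>
    congr 1
    refine Finset.ext fun x => ?_
    have := @h x
    rw [mem_filter]
    by_cases x ∈ S <;> by_cases x ∈ T <;> simp_all [chainLevel]

end Chains

section ChainsThrough

variable {n : ℕ}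

/-- The maximal chains `∅ ⊂ {σ 0} ⊂ {σ 0, σ 1} ⊂ ⋯` of `B_n`, encoded by permutations `σ`,
that pass through `S`. -/
def chainsThrough (S : Finset (Fin n)) : Finset (Equiv.Perm (Fin n)) :=
  {σ | ∀ i, σ i ∈ S ↔ (i : ℕ) < #S}

theorem subset_or_subset_of_mem_chainsThrough {S T : Finset (Fin n)} {σ : Equiv.Perm (Fin n)}
    (hS : σ ∈ chainsThrough S) (hT : σ ∈ chainsThrough T) : S ⊆ T ∨ T ⊆ S := by
  simp only [chainsThrough, mem_filter, mem_univ, true_and] at hS hT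
  rcases le_total #S #T with h | h
  · refine .inl fun x hx => ?_
    obtain ⟨i, rfl⟩ := σ.surjective x
    exact (hT i).2 (((hS i).1 hx).trans_le h)
  · refine .inr fun x hx => ?_
    obtain ⟨i, rfl⟩ := σ.surjective x
    exact (hS i).2 (((hT i).1 hx).trans_le h)

theorem card_chainsThrough_inter {S T : Finset (Fin n)} (hST : S ⊆ T) :
    #(chainsThrough S ∩ chainsThrough T) = (#S)! * (#T - #S)! * (n - #T)! := by
  set seg : ℕ → Finset (Fin n) := fun s => {i | (i : ℕ) < s}
  have hseg : ∀ s ≤ n, #(seg s) = s := fun s hs => by simp [seg, Fin.card_filter_val_lt, hs]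
  have hs : #S ≤ n := by simpa using card_le_univ S
  have ht : #T ≤ n := by simpa using card_le_univ T
  have hsegST : seg #S ⊆ seg #T := fun i => by
    simpa [seg] using fun h => h.trans_le (card_le_card hST)
  have hfiber := card_chainLevel_fiber hST
  have hfiber' := card_chainLevel_fiber hsegST
  rw [hseg _ hs, hseg _ ht] at hfiber'
  -- `σ` passes through both `S ⊆ T` iff it carries the colouring of the positions by the
  -- thresholds `#S ≤ #T` to the colouring of `[n]` by `S ⊆ T`.
  have : chainsThrough S ∩ chainsThrough T = univ.filter fun σ : Equiv.Perm (Fin n) =>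
      chainLevel S T ∘ σ = chainLevel (seg #S) (seg #T) := by
    rw [chainsThrough, chainsThrough, ← filter_and]
    refine filter_congr fun σ _ => ?_
    simp only [funext_iff, Function.comp_apply, chainLevel_eq_chainLevel_iff hST hsegST, seg,
      mem_filter, mem_univ, true_and, forall_and]
  rw [this, ← Fintype.card_subtype, card_perm_comp_eq (fun c => by rw [hfiber, hfiber']),
    Fin.prod_univ_three]
  simp [hfiber']

theorem card_chainsThrough (S : Finset (Fin n)) : #(chainsThrough S) = (#S)! * (n - #S)! := by
  simpa using card_chainsThrough_inter (subset_refl S)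

end ChainsThrough

/-- A Bonferroni inequality. -/
theorem Finset.sum_card_le_card_biUnion_add {ι β : Type*} [DecidableEq ι] [DecidableEq β]
    (D : Finset ι) (E : ι → Finset β) :
    ∑ i ∈ D, #(E i) ≤ #(D.biUnion E) + ∑ i ∈ D, ∑ j ∈ D.erase i, #(E i ∩ E j) := by
  induction D using Finset.induction_on with
  | empty => simp
  | insert a D ha ih =>
    have hunion := card_union_add_card_inter (E a) (D.biUnion E)
    have hinter : #(E a ∩ D.biUnion E) ≤ ∑ j ∈ D, #(E a ∩ E j) := by
      rw [inter_biUnion]; exact card_biUnion_le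
    have hpairs : ∑ i ∈ D, ∑ j ∈ D.erase i, #(E i ∩ E j) ≤
        ∑ i ∈ D, ∑ j ∈ (insert a D).erase i, #(E i ∩ E j) :=
      sum_le_sum fun i _ => sum_le_sum_of_subset (erase_subset_erase _ (subset_insert _ _))
    rw [sum_insert ha, sum_insert ha, biUnion_insert, erase_insert ha]
    omega

section Binomial

theorem two_mul_choose_succ_le {n k : ℕ} (h : 2 * n ≤ 3 * k + 1) :
    2 * n.choose (k + 1) ≤ n.choose k := by
  refine Nat.le_of_mul_le_mul_right ?_ k.succ_pos
  calc 2 * n.choose (k + 1) * (k + 1) = n.choose k * (2 * (n - k)) := by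
        rw [mul_assoc, Nat.choose_succ_right_eq]; ring
    _ ≤ n.choose k * (k + 1) := by gcongr; omega

theorem two_pow_mul_choose_add_le {n k : ℕ} (h : 2 * n ≤ 3 * k + 1) (s : ℕ) :
    2 ^ s * n.choose (k + s) ≤ n.choose k := by
  induction s with
  | zero => simp
  | succ s ih =>
    calc 2 ^ (s + 1) * n.choose (k + (s + 1)) = 2 ^ s * (2 * n.choose (k + s + 1)) := by ring_nf
      _ ≤ 2 ^ s * n.choose (k + s) := by gcongr; exact two_mul_choose_succ_le (by omega)
      _ ≤ n.choose k := ih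

theorem mul_choose_le_choose_half {c n ℓ : ℕ} (hn : 12 * c ≤ n) (hℓ : 3 * n ≤ 4 * ℓ) :
    c * n.choose ℓ ≤ n.choose (n / 2) := by
  calc c * n.choose ℓ ≤ 2 ^ c * n.choose (ℓ - c + c) := by
        rw [Nat.sub_add_cancel (by omega)]; gcongr; exact c.lt_two_pow_self.le
    _ ≤ n.choose (ℓ - c) := two_pow_mul_choose_add_le (by omega) c
    _ ≤ n.choose (n / 2) := Nat.choose_le_middle _ _

theorem Nat.choose_le_choose_of_le_of_le_half {n a b : ℕ} (hab : a ≤ b) (hb : b ≤ n / 2) :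
    n.choose a ≤ n.choose b := by
  induction b, hab using Nat.le_induction with
  | base => rfl
  | succ b _ ih => exact (ih (by omega)).trans (Nat.choose_le_succ_of_lt_half_left (by omega))

theorem choose_add_le_two_pow_mul_choose_half (m : ℕ) :
    ∀ k j, (k + m).choose j ≤ 2 ^ k * m.choose (m / 2)
  | 0, j => by simpa using Nat.choose_le_middle j m
  | k + 1, 0 => by
    rw [Nat.choose_zero_right]
    exact Nat.mul_pos (Nat.two_pow_pos (k + 1)) (Nat.choose_pos (Nat.div_le_self m 2))
  | k + 1, j + 1 => by
    have h₁ := choose_add_le_two_pow_mul_choose_half m k j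
    have h₂ := choose_add_le_two_pow_mul_choose_half m k (j + 1)
    rw [show k + 1 + m = k + m + 1 by ring, Nat.choose_succ_succ, pow_succ]
    linarith

theorem choose_half_mul_pow_le (m : ℕ) :
    ∀ j, m.choose (m / 2) * (m / 2 - j) ^ j ≤ m.choose (m / 2 - j) * (m / 2 + j + 1) ^ j
  | 0 => by simp
  | j + 1 => by
    rcases lt_or_ge (m / 2) (j + 1) with h | h
    · simp [Nat.sub_eq_zero_of_le h.le]
    have hstep : m.choose (m / 2 - j) * (m / 2 - j) ≤
        m.choose (m / 2 - (j + 1)) * (m / 2 + (j + 1) + 1) := by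
      rw [show m / 2 - j = m / 2 - (j + 1) + 1 by omega, Nat.choose_succ_right_eq]
      gcongr
      omega
    calc m.choose (m / 2) * (m / 2 - (j + 1)) ^ (j + 1)
        ≤ m.choose (m / 2) * (m / 2 - j) ^ j * (m / 2 - j) := by
          rw [pow_succ, ← mul_assoc]; gcongr <;> omega
      _ ≤ m.choose (m / 2 - j) * (m / 2 + j + 1) ^ j * (m / 2 - j) :=
          Nat.mul_le_mul_right _ (choose_half_mul_pow_le m j)
      _ = m.choose (m / 2 - j) * (m / 2 - j) * (m / 2 + j + 1) ^ j := by ring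
      _ ≤ m.choose (m / 2 - (j + 1)) * (m / 2 + (j + 1) + 1) * (m / 2 + (j + 1) + 1) ^ j := by
          gcongr; omega
      _ = _ := by ring

end Binomial

section ChainEstimates

variable {n : ℕ}

theorem card_chainsThrough_mul_choose (S : Finset (Fin n)) :
    #(chainsThrough S) * n.choose #S = n ! := by
  rw [card_chainsThrough, mul_comm, ← mul_assoc]
  exact Nat.choose_mul_factorial_mul_factorial (by simpa using card_le_univ S)

theorem mul_factorial_le_choose_mul_card_chainsThrough {c : ℕ} {S : Finset (Fin n)}
    (h : c * n.choose #S ≤ n.choose (n / 2)) : c * n ! ≤ n.choose (n / 2) * #(chainsThrough S) := by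
  rw [← card_chainsThrough_mul_choose S]
  calc c * (#(chainsThrough S) * n.choose #S) = c * n.choose #S * #(chainsThrough S) := by ring
    _ ≤ _ := Nat.mul_le_mul_right _ h

theorem card_chainsThrough_inter_mul_choose {S T : Finset (Fin n)} (hST : S ⊆ T) :
    #(chainsThrough S ∩ chainsThrough T) * (n - #S).choose (#T - #S) = #(chainsThrough S) := by
  have hst := card_le_card hST
  have ht : #T ≤ n := by simpa using card_le_univ T
  rw [card_chainsThrough_inter hST, card_chainsThrough, ← Nat.choose_mul_factorial_mul_factorial
    (show #T - #S ≤ n - #S by omega), show n - #S - (#T - #S) = n - #T by omega]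
  ring

theorem mul_card_chainsThrough_inter_le {S T : Finset (Fin n)} (hST : S ⊂ T) (hT : 4 * #T < 3 * n) :
    n * #(chainsThrough S ∩ chainsThrough T) ≤ 4 * #(chainsThrough S) := by
  have hst := card_lt_card hST
  have hchoose : n - #T + 1 ≤ (n - #S).choose (#T - #S) := by
    rw [← Nat.choose_symm (by omega), show n - #S - (#T - #S) = n - #T by omega,
      ← Nat.choose_succ_self_right]
    exact Nat.choose_le_choose _ (by omega)
  rw [← card_chainsThrough_inter_mul_choose hST.subset]
  calc n * #(chainsThrough S ∩ chainsThrough T)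
      ≤ 4 * (n - #T + 1) * #(chainsThrough S ∩ chainsThrough T) := Nat.mul_le_mul_right _ (by omega)
    _ ≤ 4 * ((n - #S).choose (#T - #S)) * #(chainsThrough S ∩ chainsThrough T) := by gcongr
    _ = _ := by ring

theorem mul_card_chainsThrough_inter_le_add {S T : Finset (Fin n)} (hne : S ≠ T)
    (hS : 4 * #S < 3 * n) (hT : 4 * #T < 3 * n) :
    n * #(chainsThrough S ∩ chainsThrough T) ≤ 4 * (#(chainsThrough S) + #(chainsThrough T)) := by
  by_cases hST : S ⊆ T
  · have := mul_card_chainsThrough_inter_le (ssubset_of_subset_of_ne hST hne) hT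
    omega
  by_cases hTS : T ⊆ S
  · have := mul_card_chainsThrough_inter_le (ssubset_of_subset_of_ne hTS hne.symm) hS
    rw [inter_comm]
    omega
  have : chainsThrough S ∩ chainsThrough T = ∅ := by
    refine eq_empty_of_forall_notMem fun σ hσ => ?_
    rw [mem_inter] at hσ
    rcases subset_or_subset_of_mem_chainsThrough hσ.1 hσ.2 with h | h <;> contradiction
  simp [this]

theorem mul_le_card_biUnion_chainsThrough_of_forall_lt (D : Finset (Finset (Fin n)))
    (hD : ∀ S ∈ D, 4 * #S < 3 * n) :
    (n - 8 * #D) * (#D * n !) ≤ n * (n.choose (n / 2) * #(D.biUnion chainsThrough)) := by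
  set a : Finset (Fin n) → ℕ := fun S => #(chainsThrough S)
  have hpairs : n * ∑ S ∈ D, ∑ T ∈ D.erase S, #(chainsThrough S ∩ chainsThrough T) ≤
      8 * #D * ∑ S ∈ D, a S :=
    calc n * ∑ S ∈ D, ∑ T ∈ D.erase S, #(chainsThrough S ∩ chainsThrough T)
        ≤ ∑ S ∈ D, ∑ T ∈ D.erase S, 4 * (a S + a T) := by
          simp_rw [mul_sum]
          refine sum_le_sum fun S hS => sum_le_sum fun T hT => ?_
          exact mul_card_chainsThrough_inter_le_add (ne_of_mem_erase hT).symm (hD S hS)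
            (hD T (mem_of_mem_erase hT))
      _ ≤ ∑ S ∈ D, ∑ T ∈ D, 4 * (a S + a T) :=
          sum_le_sum fun S _ => sum_le_sum_of_subset (erase_subset _ _)
      _ = 8 * #D * ∑ S ∈ D, a S := by
          simp only [mul_add, sum_add_distrib, ← mul_sum, sum_const, smul_eq_mul]
          ring
  have hunion : (n - 8 * #D) * ∑ S ∈ D, a S ≤ n * #(D.biUnion chainsThrough) := by
    have := Nat.mul_le_mul_left n (sum_card_le_card_biUnion_add D chainsThrough)
    rw [mul_add] at this
    rw [Nat.sub_mul, tsub_le_iff_right]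
    linarith
  have hfact : #D * n ! ≤ n.choose (n / 2) * ∑ S ∈ D, a S := by
    rw [mul_sum, ← smul_eq_mul, ← sum_const]
    exact sum_le_sum fun S _ => by
      simpa using mul_factorial_le_choose_mul_card_chainsThrough (c := 1)
        (by simpa using Nat.choose_le_middle #S n)
  calc (n - 8 * #D) * (#D * n !) ≤ (n - 8 * #D) * (n.choose (n / 2) * ∑ S ∈ D, a S) := by gcongr
    _ = n.choose (n / 2) * ((n - 8 * #D) * ∑ S ∈ D, a S) := by ring
    _ ≤ n.choose (n / 2) * (n * #(D.biUnion chainsThrough)) := by gcongr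
    _ = _ := by ring

theorem mul_le_card_biUnion_chainsThrough {c : ℕ} (hn : 12 * c ≤ n) {D : Finset (Finset (Fin n))}
    (hc : c ≤ #D) :
    (n - 8 * c) * (c * n !) ≤ n * (n.choose (n / 2) * #(D.biUnion chainsThrough)) := by
  by_cases hD : ∀ S ∈ D, 4 * #S < 3 * n
  · obtain ⟨D', hD'D, rfl⟩ := exists_subset_card_eq hc
    calc _ ≤ n * (n.choose (n / 2) * #(D'.biUnion chainsThrough)) :=
          mul_le_card_biUnion_chainsThrough_of_forall_lt D' fun S hS => hD S (hD'D hS)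
      _ ≤ _ := by gcongr
  · push Not at hD
    obtain ⟨S, hS, hSn⟩ := hD
    calc (n - 8 * c) * (c * n !) ≤ n * (c * n !) := by gcongr; omega
      _ ≤ n * (n.choose (n / 2) * #(chainsThrough S)) := Nat.mul_le_mul_left _
          (mul_factorial_le_choose_mul_card_chainsThrough (mul_choose_le_choose_half hn hSn))
      _ ≤ _ := by gcongr; exact subset_biUnion_of_mem _ hS

end ChainEstimates

section Families

variable {P : Type*} [PartialOrder P] {n : ℕ}

theorem isStrongEmbedding_iff {f : P → Finset (Fin n)} :
    IsStrongEmbedding f ↔ ∀ a b, f a ⊆ f b ↔ a ≤ b := by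
  refine ⟨fun h a b => ?_, fun h => ?_⟩
  · rw [le_iff_eq_or_lt, le_iff_eq_or_lt, h.1.eq_iff, h.2 a b]
  · let e : P ↪o Finset (Fin n) := OrderEmbedding.ofMapLEIff f h
    exact ⟨e.injective, fun a b => e.lt_iff_lt.symm⟩

variable (P) in
theorem exists_isStrongEmbedding [Fintype P] :
    ∃ f : P → Finset (Fin (Fintype.card P)), IsStrongEmbedding f := by
  classical
  let e := Fintype.equivFin P
  refine ⟨fun p => (univ.filter (· ≤ p)).map e.toEmbedding, isStrongEmbedding_iff.2 fun a b => ?_⟩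
  rw [map_subset_map]
  refine ⟨fun h => by simpa using h (mem_filter.2 ⟨mem_univ a, le_rfl⟩), fun hab x hx => ?_⟩
  simp only [mem_filter, mem_univ, true_and] at hx ⊢
  exact hx.trans hab

theorem mem_convexClosure {F : Finset (Finset (Fin n))} {S : Finset (Fin n)} :
    S ∈ convexClosure F ↔ ∃ A ∈ F, ∃ B ∈ F, A ⊆ S ∧ S ⊆ B := by
  simp [convexClosure]

theorem subset_convexClosure (F : Finset (Finset (Fin n))) : F ⊆ convexClosure F :=
  fun S hS => mem_convexClosure.2 ⟨S, hS, S, hS, subset_rfl, subset_rfl⟩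

theorem mem_convexClosure_of_subset_of_subset {F : Finset (Finset (Fin n))} {S T X : Finset (Fin n)}
    (hS : S ∈ convexClosure F) (hT : T ∈ convexClosure F) (hSX : S ⊆ X) (hXT : X ⊆ T) :
    X ∈ convexClosure F := by
  obtain ⟨A, hA, -, -, hAS, -⟩ := mem_convexClosure.1 hS
  obtain ⟨-, -, B, hB, -, hTB⟩ := mem_convexClosure.1 hT
  exact mem_convexClosure.2 ⟨A, hA, B, hB, hAS.trans hSX, hXT.trans hTB⟩

variable [Fintype P]

theorem closureNumStar_le {C : Finset (Finset (Fin n))} (h : IsInducedCopy P C) :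
    closureNumStar P ≤ #(convexClosure C) := by
  obtain ⟨f, hf, rfl⟩ := h
  exact Nat.sInf_le ⟨n, f, hf, rfl⟩

variable (P) in
theorem exists_card_convexClosure_eq_closureNumStar :
    ∃ (k : ℕ) (f : P → Finset (Fin k)), IsStrongEmbedding f ∧
      #(convexClosure (univ.image f)) = closureNumStar P := by
  obtain ⟨f, hf⟩ := exists_isStrongEmbedding P
  exact Nat.sInf_mem (⟨_, _, f, hf, rfl⟩ : {m | ∃ (k : ℕ) (f : P → Finset (Fin k)),
    IsStrongEmbedding f ∧ #(convexClosure (univ.image f)) = m}.Nonempty)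

variable (P) in
theorem closureNumStar_pos [Nonempty P] : 0 < closureNumStar P := by
  obtain ⟨k, f, -, hf⟩ := exists_card_convexClosure_eq_closureNumStar P
  rw [← hf, card_pos]
  exact (univ_nonempty.image f).mono (subset_convexClosure _)

theorem IsInducedCopy.card_eq {C : Finset (Finset (Fin n))} (h : IsInducedCopy P C) :
    #C = Fintype.card P := by
  obtain ⟨f, hf, rfl⟩ := h
  rw [card_image_of_injective _ hf.1, Finset.card_univ]

theorem Unrelated.disjoint {F₁ F₂ : Finset (Finset (Fin n))} (h : Unrelated F₁ F₂) :
    Disjoint F₁ F₂ :=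
  disjoint_left.2 fun S h₁ h₂ => (h S h₁ S h₂).1 subset_rfl

theorem card_sup_id_eq {𝒞 : Finset (Finset (Finset (Fin n)))}
    (hcopy : ∀ C ∈ 𝒞, IsInducedCopy P C)
    (hunrel : ∀ C₁ ∈ 𝒞, ∀ C₂ ∈ 𝒞, C₁ ≠ C₂ → Unrelated C₁ C₂) :
    #(𝒞.sup id) = #𝒞 * Fintype.card P := by
  classical
  rw [sup_eq_biUnion,
    card_biUnion (t := id) fun C₁ h₁ C₂ h₂ hne => (hunrel C₁ h₁ C₂ h₂ hne).disjoint,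
    sum_congr rfl fun C hC => (hcopy C hC).card_eq (C := id C), sum_const, smul_eq_mul]

theorem bddAbove_paStar_set :
    BddAbove {m | ∃ F : Finset (Finset (Fin n)), IsUnionOfUnrelatedInducedCopies P F ∧ #F = m} :=
  bddAbove_def.2 ⟨2 ^ n, by rintro _ ⟨F, -, rfl⟩; simpa using card_le_univ F⟩

theorem le_paStar {F : Finset (Finset (Fin n))} (hF : IsUnionOfUnrelatedInducedCopies P F) :
    #F ≤ PaStar P n :=
  le_csSup bddAbove_paStar_set ⟨F, hF, rfl⟩

variable (P n) in
theorem exists_card_eq_paStar :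
    ∃ F : Finset (Finset (Fin n)), IsUnionOfUnrelatedInducedCopies P F ∧ #F = PaStar P n :=
  Nat.sSup_mem (⟨0, ∅, ⟨∅, by simp, by simp, rfl⟩, rfl⟩ : {m | ∃ F : Finset (Finset (Fin n)),
    IsUnionOfUnrelatedInducedCopies P F ∧ #F = m}.Nonempty) bddAbove_paStar_set

variable (P n) in
theorem paStar_of_isEmpty [IsEmpty P] : PaStar P n = 0 := by
  obtain ⟨F, ⟨𝒞, hcopy, hunrel, rfl⟩, hF⟩ := exists_card_eq_paStar P n
  rw [← hF, card_sup_id_eq hcopy hunrel, Fintype.card_eq_zero, mul_zero]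

end Families

section UpperBound

open Filter Topology

variable {P : Type*} [PartialOrder P] [Fintype P] {n : ℕ}

theorem disjoint_biUnion_chainsThrough_of_unrelated {C₁ C₂ : Finset (Finset (Fin n))}
    (h : Unrelated C₁ C₂) : Disjoint ((convexClosure C₁).biUnion chainsThrough)
      ((convexClosure C₂).biUnion chainsThrough) := by
  refine disjoint_left.2 fun σ h₁ h₂ => ?_
  obtain ⟨S₁, hS₁, hσ₁⟩ := mem_biUnion.1 h₁
  obtain ⟨S₂, hS₂, hσ₂⟩ := mem_biUnion.1 h₂
  obtain ⟨A₁, hA₁, B₁, hB₁, hAS₁, hSB₁⟩ := mem_convexClosure.1 hS₁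
  obtain ⟨A₂, hA₂, B₂, hB₂, hAS₂, hSB₂⟩ := mem_convexClosure.1 hS₂
  rcases subset_or_subset_of_mem_chainsThrough hσ₁ hσ₂ with h₁₂ | h₂₁
  · exact (h A₁ hA₁ B₂ hB₂).1 (hAS₁.trans (h₁₂.trans hSB₂))
  · exact (h B₁ hB₁ A₂ hA₂).2 (hAS₂.trans (h₂₁.trans hSB₁))

theorem card_mul_le_of_isUnionOfUnrelatedInducedCopies {F : Finset (Finset (Fin n))}
    (hn : 12 * closureNumStar P ≤ n) (hF : IsUnionOfUnrelatedInducedCopies P F) :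
    #F * (closureNumStar P * (n - 8 * closureNumStar P)) ≤
      Fintype.card P * (n * n.choose (n / 2)) := by
  classical
  obtain ⟨𝒞, hcopy, hunrel, rfl⟩ := hF
  set c := closureNumStar P
  have hchains : ∑ C ∈ 𝒞, #((convexClosure C).biUnion chainsThrough) ≤ n ! := by
    rw [← card_biUnion fun C₁ h₁ C₂ h₂ hne =>
      disjoint_biUnion_chainsThrough_of_unrelated (hunrel C₁ h₁ C₂ h₂ hne)]
    simpa [Fintype.card_perm] using
      card_le_univ (𝒞.biUnion fun C => (convexClosure C).biUnion chainsThrough)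
  have hcopies : #𝒞 * ((n - 8 * c) * (c * n !)) ≤ n * (n.choose (n / 2) * n !) :=
    calc #𝒞 * ((n - 8 * c) * (c * n !))
        ≤ ∑ C ∈ 𝒞, n * (n.choose (n / 2) * #((convexClosure C).biUnion chainsThrough)) := by
          rw [← smul_eq_mul, ← sum_const]
          exact sum_le_sum fun C hC =>
            mul_le_card_biUnion_chainsThrough hn (closureNumStar_le (hcopy C hC))
      _ = n * (n.choose (n / 2) * ∑ C ∈ 𝒞, #((convexClosure C).biUnion chainsThrough)) := by
          rw [mul_sum, mul_sum]
      _ ≤ n * (n.choose (n / 2) * n !) := by gcongr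
  rw [card_sup_id_eq hcopy hunrel]
  refine Nat.le_of_mul_le_mul_right ?_ n.factorial_pos
  calc #𝒞 * Fintype.card P * (c * (n - 8 * c)) * n ! =
        Fintype.card P * (#𝒞 * ((n - 8 * c) * (c * n !))) := by ring
    _ ≤ Fintype.card P * (n * (n.choose (n / 2) * n !)) := by gcongr
    _ = _ := by ring

theorem eventually_paStar_div_lt [Nonempty P] {b : ℝ}
    (hb : (Fintype.card P : ℝ) / closureNumStar P < b) :
    ∀ᶠ n : ℕ in atTop, (PaStar P n : ℝ) / n.choose (n / 2) < b := by
  set c := closureNumStar P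
  have hc : (0 : ℝ) < c := by exact_mod_cast closureNumStar_pos P
  have hlim : Tendsto (fun n : ℕ => (Fintype.card P : ℝ) / c * (n / (n + -(8 * c : ℝ)))) atTop
      (𝓝 ((Fintype.card P : ℝ) / c)) := by
    simpa using (tendsto_natCast_div_add_atTop (-(8 * c : ℝ))).const_mul ((Fintype.card P : ℝ) / c)
  filter_upwards [hlim.eventually (gt_mem_nhds hb), eventually_ge_atTop (12 * c + 1)] with n hlt hn
  refine lt_of_le_of_lt ?_ hlt
  obtain ⟨F, hF, hcard⟩ := exists_card_eq_paStar P n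
  have hnat := card_mul_le_of_isUnionOfUnrelatedInducedCopies (by omega) hF
  rw [hcard] at hnat
  have hreal : (PaStar P n : ℝ) * (c * ((n - 8 * c : ℕ) : ℝ)) ≤
      Fintype.card P * (n * n.choose (n / 2)) := by exact_mod_cast hnat
  have hgap : (0 : ℝ) < ((n - 8 * c : ℕ) : ℝ) := by exact_mod_cast (show 0 < n - 8 * c by omega)
  have hC : (0 : ℝ) < n.choose (n / 2) := by exact_mod_cast Nat.choose_pos (Nat.div_le_self n 2)
  rw [Nat.cast_sub (by omega), Nat.cast_mul, Nat.cast_ofNat] at hreal hgap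
  rw [div_le_iff₀ hC, ← sub_eq_add_neg,
    show (Fintype.card P : ℝ) / c * (n / (n - 8 * c)) * n.choose (n / 2) =
      Fintype.card P * (n * n.choose (n / 2)) / (c * (n - 8 * c)) by field_simp,
    le_div_iff₀ (by positivity)]
  exact hreal

end UpperBound

section Glue

variable {a b : ℕ}

def glue (A : Finset (Fin a)) (B : Finset (Fin b)) : Finset (Fin (a + b)) :=
  (A.disjSum B).map finSumFinEquiv.toEmbedding

@[simp]
theorem glue_subset_glue {A A' : Finset (Fin a)} {B B' : Finset (Fin b)} :
    glue A B ⊆ glue A' B' ↔ A ⊆ A' ∧ B ⊆ B' := by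
  simp [glue, disjSum_subset]

variable {P : Type*} [PartialOrder P] {g : P → Finset (Fin a)} {h : P → Finset (Fin b)}

theorem IsStrongEmbedding.glue_monotone (hg : IsStrongEmbedding g) (hh : Monotone h) :
    IsStrongEmbedding fun p => glue (g p) (h p) := by
  refine isStrongEmbedding_iff.2 fun p q => ?_
  rw [glue_subset_glue, isStrongEmbedding_iff.1 hg]
  exact ⟨And.left, fun hpq => ⟨hpq, hh hpq⟩⟩

theorem Monotone.glue_isStrongEmbedding (hg : Monotone g) (hh : IsStrongEmbedding h) :
    IsStrongEmbedding fun p => glue (g p) (h p) := by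
  refine isStrongEmbedding_iff.2 fun p q => ?_
  rw [glue_subset_glue, isStrongEmbedding_iff.1 hh]
  exact ⟨And.right, fun hpq => ⟨hg hpq, hpq⟩⟩

end Glue

def NotBelow {P : Type*} {k : ℕ} (g h : P → Finset (Fin k)) : Prop :=
  ∀ p q, ¬ g p ⊆ h q

theorem exists_list_pairwise_not_subset {α : Type*} [DecidableEq α] (𝒜 : Finset (Finset α)) :
    ∃ l : List (Finset α), l.length = #𝒜 ∧ (∀ A ∈ l, A ∈ 𝒜) ∧ l.Pairwise fun A B => ¬ A ⊆ B := by
  let l := 𝒜.toList.mergeSort fun A B => decide (#B ≤ #A)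
  have hperm : l.Perm 𝒜.toList := List.mergeSort_perm _ _
  have hsorted : l.Pairwise fun A B => #B ≤ #A := by
    simpa using List.pairwise_mergeSort (le := fun A B : Finset α => decide (#B ≤ #A))
      (by simp only [decide_eq_true_eq]; omega)
      (by simp only [Bool.or_eq_true, decide_eq_true_eq]; omega) _
  refine ⟨l, by simp [hperm.length_eq], fun A hA => by simpa using hperm.subset hA, ?_⟩
  exact (hsorted.and (hperm.nodup_iff.2 (nodup_toList 𝒜))).imp fun h hAB =>
    h.2 (eq_of_subset_of_card_le hAB h.1)

theorem pairwise_notBelow_flatMap_glue {P : Type*} {a b : ℕ} {as : List (Finset (Fin a))}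
    (has : as.Pairwise fun A B => ¬ A ⊆ B) {l : List (P → Finset (Fin b))}
    (hl : l.Pairwise NotBelow) :
    (as.flatMap fun A => l.map fun g p => glue A (g p)).Pairwise NotBelow := by
  refine List.pairwise_flatMap.2 ⟨fun A _ => List.pairwise_map.2 (hl.imp ?_), has.imp ?_⟩
  · exact fun h p q hpq => h p q (glue_subset_glue.1 hpq).2
  · intro A B hAB x hx y hy p q hpq
    obtain ⟨g, -, rfl⟩ := List.mem_map.1 hx
    obtain ⟨g', -, rfl⟩ := List.mem_map.1 hy
    exact hAB (glue_subset_glue.1 hpq).1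

section Palette

variable {P : Type*} [PartialOrder P] [Fintype P] {k₀ m : ℕ}

/-- The sets of `B_{k₀}` outside the closure `D` of `f₀` are split into those above a member of
`D` and the rest; the new list runs through the first kind glued with `l`, then `f₀` glued with
all of `B_m`, then the second kind glued with `l`, and convexity of `D` makes this order valid. -/
theorem exists_list_glue_convexClosure {f₀ : P → Finset (Fin k₀)} (hf₀ : IsStrongEmbedding f₀)
    {l : List (P → Finset (Fin m))} (hl : ∀ g ∈ l, IsStrongEmbedding g)
    (hl' : l.Pairwise NotBelow) :
    ∃ l' : List (P → Finset (Fin (k₀ + m))), (∀ g ∈ l', IsStrongEmbedding g) ∧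
      l'.Pairwise NotBelow ∧
      l'.length = 2 ^ m + (2 ^ k₀ - #(convexClosure (univ.image f₀))) * l.length := by
  classical
  set D := convexClosure (univ.image f₀)
  have hf₀D (p : P) : f₀ p ∈ D := subset_convexClosure _ (mem_image_of_mem f₀ (mem_univ p))
  set U := Dᶜ.filter fun A => ∃ S ∈ D, S ⊆ A
  set V := Dᶜ.filter fun A => ¬ ∃ S ∈ D, S ⊆ A
  have hUf₀ {A} (hA : A ∈ U) (q : P) : ¬ A ⊆ f₀ q := fun hAq => by
    obtain ⟨hAD, S, hS, hSA⟩ := by simpa [U] using hA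
    exact hAD (mem_convexClosure_of_subset_of_subset hS (hf₀D q) hSA hAq)
  have hUV {A A'} (hA : A ∈ U) (hA' : A' ∈ V) : ¬ A ⊆ A' := fun hAA' => by
    obtain ⟨-, S, hS, hSA⟩ := by simpa [U] using hA
    exact (mem_filter.1 hA').2 ⟨S, hS, hSA.trans hAA'⟩
  have hf₀V {A'} (hA' : A' ∈ V) (p : P) : ¬ f₀ p ⊆ A' := fun h =>
    (mem_filter.1 hA').2 ⟨f₀ p, hf₀D p, h⟩
  obtain ⟨us, hus_len, hus_mem, hus⟩ := exists_list_pairwise_not_subset U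
  obtain ⟨vs, hvs_len, hvs_mem, hvs⟩ := exists_list_pairwise_not_subset V
  obtain ⟨ts, hts_len, -, hts⟩ := exists_list_pairwise_not_subset (univ : Finset (Finset (Fin m)))
  let block (A : Finset (Fin k₀)) : List (P → Finset (Fin (k₀ + m))) :=
    l.map fun g p => glue A (g p)
  let base : List (P → Finset (Fin (k₀ + m))) := ts.map fun T p => glue (f₀ p) T
  refine ⟨us.flatMap block ++ base ++ vs.flatMap block, ?_, ?_, ?_⟩
  · simp only [List.mem_append, List.mem_flatMap, List.mem_map, block, base]
    rintro _ ((⟨A, -, g, hg, rfl⟩ | ⟨T, -, rfl⟩) | ⟨A, -, g, hg, rfl⟩)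
    · exact monotone_const.glue_isStrongEmbedding (hl g hg)
    · exact hf₀.glue_monotone monotone_const
    · exact monotone_const.glue_isStrongEmbedding (hl g hg)
  · simp only [List.pairwise_append, List.mem_append, List.mem_flatMap, List.mem_map, block, base]
    refine ⟨⟨pairwise_notBelow_flatMap_glue hus hl',
      List.pairwise_map.2 (hts.imp fun h p q hpq => h (glue_subset_glue.1 hpq).2), ?_⟩,
      pairwise_notBelow_flatMap_glue hvs hl', ?_⟩
    · rintro _ ⟨A, hA, g, -, rfl⟩ _ ⟨T, -, rfl⟩ p q hpq
      exact hUf₀ (hus_mem A hA) q (glue_subset_glue.1 hpq).1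
    · rintro _ (⟨A, hA, g, -, rfl⟩ | ⟨T, -, rfl⟩) _ ⟨A', hA', g', -, rfl⟩ p q hpq
      · exact hUV (hus_mem A hA) (hvs_mem A' hA') (glue_subset_glue.1 hpq).1
      · exact hf₀V (hvs_mem A' hA') p (glue_subset_glue.1 hpq).1
  · have hUV_card : #U + #V = 2 ^ k₀ - #D := by
      rw [card_filter_add_card_filter_not, card_compl, Fintype.card_finset, Fintype.card_fin]
    simp only [List.length_append, List.length_flatMap, List.length_map, List.map_const',
      List.sum_replicate, smul_eq_mul, hus_len, hvs_len, hts_len, block, base, Finset.card_univ,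
      Fintype.card_finset, Fintype.card_fin, ← hUV_card]
    ring

theorem exists_list_two_pow_le {f₀ : P → Finset (Fin k₀)} (hf₀ : IsStrongEmbedding f₀) (t : ℕ) :
    ∃ (k : ℕ) (l : List (P → Finset (Fin k))), (∀ g ∈ l, IsStrongEmbedding g) ∧
      l.Pairwise NotBelow ∧ k = k₀ * t ∧
      2 ^ k ≤ #(convexClosure (univ.image f₀)) * l.length +
        (2 ^ k₀ - #(convexClosure (univ.image f₀))) ^ t := by
  set c := #(convexClosure (univ.image f₀))
  have hc : c ≤ 2 ^ k₀ := by simpa using card_le_univ (convexClosure (univ.image f₀))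
  induction t with
  | zero => exact ⟨0, [], by simp, by simp, by simp, by simp⟩
  | succ t ih =>
    obtain ⟨k, l, hl, hl', rfl, hk⟩ := ih
    obtain ⟨l', hl'₁, hl'₂, hlen⟩ := exists_list_glue_convexClosure hf₀ hl hl'
    refine ⟨k₀ + k₀ * t, l', hl'₁, hl'₂, by ring, ?_⟩
    obtain ⟨w, hw⟩ : ∃ w, 2 ^ k₀ = c + w := ⟨2 ^ k₀ - c, by omega⟩
    rw [hlen, hw, Nat.add_sub_cancel_left]
    calc 2 ^ (k₀ + k₀ * t) = c * 2 ^ (k₀ * t) + w * 2 ^ (k₀ * t) := by rw [pow_add, hw]; ring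
      _ ≤ c * 2 ^ (k₀ * t) + w * (c * l.length + w ^ t) := by
          gcongr; rwa [hw, Nat.add_sub_cancel_left] at hk
      _ = c * (2 ^ (k₀ * t) + w * l.length) + w ^ (t + 1) := by ring

end Palette

theorem not_glue_subset_glue_of_card_eq {P : Type*} {k m s : ℕ}
    {l : List (P → Finset (Fin k))} (hl : l.Pairwise NotBelow) {i j : Fin l.length}
    {R R' : Finset (Fin m)} (hR : #R = s + i) (hR' : #R' = s + j) (hne : ¬ (i = j ∧ R = R'))
    (p q : P) :
    ¬ glue (l.get i p) R ⊆ glue (l.get j q) R' := by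
  intro hsub
  obtain ⟨hsub₁, hsub₂⟩ := glue_subset_glue.1 hsub
  rcases lt_trichotomy i j with hij | rfl | hij
  · exact List.pairwise_iff_get.1 hl i j hij p q hsub₁
  · exact hne ⟨rfl, eq_of_subset_of_card_le hsub₂ (by omega)⟩
  · have := card_le_card hsub₂
    have : (j : ℕ) < i := hij
    omega

section Layering

variable {P : Type*} [PartialOrder P] [Fintype P]

/-- Embedding `i` of the list is glued with every set of level `m / 2 - L + i` of `B_m`. -/
theorem card_mul_choose_le_paStar [Nonempty P] {k : ℕ} {l : List (P → Finset (Fin k))}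
    (hl : ∀ g ∈ l, IsStrongEmbedding g) (hl' : l.Pairwise NotBelow) {m : ℕ}
    (hm : l.length ≤ m / 2) :
    Fintype.card P * (l.length * m.choose (m / 2 - l.length)) ≤ PaStar P (k + m) := by
  classical
  set L := l.length
  let copy (x : Σ _ : Fin L, Finset (Fin m)) : Finset (Finset (Fin (k + m))) :=
    univ.image fun p => glue (l.get x.1 p) x.2
  let I : Finset (Σ _ : Fin L, Finset (Fin m)) :=
    univ.sigma fun i => powersetCard (m / 2 - L + i) univ
  have hnot_subset : ∀ x ∈ I, ∀ y ∈ I, x ≠ y → ∀ p q,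
      ¬ glue (l.get x.1 p) x.2 ⊆ glue (l.get y.1 q) y.2 := by
    rintro ⟨i, R⟩ hx ⟨j, R'⟩ hy hne
    simp only [I, mem_sigma, mem_univ, mem_powersetCard, subset_univ, true_and] at hx hy
    exact not_glue_subset_glue_of_card_eq hl' hx hy fun h => hne (Sigma.ext h.1 (heq_of_eq h.2))
  have hunrel : ∀ x ∈ I, ∀ y ∈ I, x ≠ y → Unrelated (copy x) (copy y) := by
    intro x hx y hy hne _ hX _ hY
    obtain ⟨p, -, rfl⟩ := mem_image.1 hX
    obtain ⟨q, -, rfl⟩ := mem_image.1 hY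
    exact ⟨hnot_subset x hx y hy hne p q, hnot_subset y hy x hx hne.symm q p⟩
  have hinj : Set.InjOn copy I := fun x hx y hy hxy => by
    by_contra hne
    have := (hunrel x hx y hy hne).disjoint
    rw [← hxy, disjoint_self, bot_eq_empty, ← not_nonempty_iff_eq_empty] at this
    exact this (univ_nonempty.image _)
  have hcopy : ∀ C ∈ I.image copy, IsInducedCopy P C := by
    simp only [mem_image]
    rintro _ ⟨x, -, rfl⟩
    exact ⟨_, (hl _ (List.get_mem _ _)).glue_monotone monotone_const, rfl⟩
  have hcopy_unrel : ∀ C₁ ∈ I.image copy, ∀ C₂ ∈ I.image copy, C₁ ≠ C₂ → Unrelated C₁ C₂ := by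
    simp only [mem_image]
    rintro _ ⟨x, hx, rfl⟩ _ ⟨y, hy, rfl⟩ hne
    exact hunrel x hx y hy fun h => hne (h ▸ rfl)
  have hI : L * m.choose (m / 2 - L) ≤ #I := by
    calc L * m.choose (m / 2 - L) = ∑ _i : Fin L, m.choose (m / 2 - L) := by simp
      _ ≤ ∑ i : Fin L, m.choose (m / 2 - L + i) :=
          sum_le_sum fun i _ => Nat.choose_le_choose_of_le_of_le_half (by omega) (by omega)
      _ = #I := by simp [I, Finset.card_sigma]
  calc Fintype.card P * (L * m.choose (m / 2 - L)) ≤ #(I.image copy) * Fintype.card P := by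
        rw [Finset.card_image_of_injOn hinj, mul_comm]; gcongr
    _ = #((I.image copy).sup id) := (card_sup_id_eq hcopy hcopy_unrel).symm
    _ ≤ PaStar P (k + m) := le_paStar ⟨_, hcopy, hcopy_unrel, rfl⟩

end Layering

section LowerBound

open Filter Topology

variable {P : Type*} [PartialOrder P] [Fintype P] [Nonempty P]

theorem mul_div_pow_le_paStar_div {k : ℕ} {l : List (P → Finset (Fin k))}
    (hl : ∀ g ∈ l, IsStrongEmbedding g) (hl' : l.Pairwise NotBelow) {m : ℕ}
    (hm : l.length ≤ m / 2) :
    (Fintype.card P * l.length / 2 ^ k : ℝ) *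
        (((m / 2 - l.length : ℕ) : ℝ) / ((m / 2 - l.length : ℕ) + (2 * l.length + 1))) ^ l.length ≤
      PaStar P (k + m) / (k + m).choose ((k + m) / 2) := by
  set L := l.length
  set z := m / 2 - L
  have hC : (0 : ℝ) < m.choose (m / 2) := by exact_mod_cast Nat.choose_pos (Nat.div_le_self m 2)
  have hN : (0 : ℝ) < (k + m).choose ((k + m) / 2) := by
    exact_mod_cast Nat.choose_pos (Nat.div_le_self _ 2)
  have hratio : ((z : ℝ) / (z + (2 * L + 1))) ^ L ≤ m.choose z / m.choose (m / 2) := by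
    rw [div_pow, div_le_div_iff₀ (by positivity) hC]
    have := choose_half_mul_pow_le m L
    rw [show m / 2 + L + 1 = z + (2 * L + 1) by omega] at this
    exact_mod_cast (mul_comm _ _).trans_le (this.trans_eq (by ring))
  have hlayer : (Fintype.card P * (L * m.choose z) : ℝ) ≤ PaStar P (k + m) := by
    exact_mod_cast card_mul_choose_le_paStar hl hl' hm
  have hvandermonde : ((k + m).choose ((k + m) / 2) : ℝ) ≤ 2 ^ k * m.choose (m / 2) := by
    exact_mod_cast choose_add_le_two_pow_mul_choose_half m k _
  calc (Fintype.card P * L / 2 ^ k : ℝ) * ((z : ℝ) / (z + (2 * L + 1))) ^ L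
      ≤ (Fintype.card P * L / 2 ^ k : ℝ) * (m.choose z / m.choose (m / 2)) := by gcongr
    _ = (Fintype.card P * (L * m.choose z) : ℝ) / (2 ^ k * m.choose (m / 2)) := by
        field_simp
    _ ≤ PaStar P (k + m) / (2 ^ k * m.choose (m / 2)) := by gcongr
    _ ≤ PaStar P (k + m) / (k + m).choose ((k + m) / 2) := by gcongr

theorem exists_list_lt_card_mul_div_two_pow {a : ℝ}
    (ha : a < (Fintype.card P : ℝ) / closureNumStar P) :
    ∃ (k : ℕ) (l : List (P → Finset (Fin k))), (∀ g ∈ l, IsStrongEmbedding g) ∧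
      l.Pairwise NotBelow ∧ a < Fintype.card P * l.length / 2 ^ k := by
  obtain ⟨k₀, f₀, hf₀, hc₀⟩ := exists_card_convexClosure_eq_closureNumStar P
  set c := closureNumStar P
  have hc : (0 : ℝ) < c := by exact_mod_cast closureNumStar_pos P
  have hc2 : c ≤ 2 ^ k₀ := hc₀ ▸ by simpa using card_le_univ (convexClosure (univ.image f₀))
  obtain ⟨w, hw⟩ : ∃ w, 2 ^ k₀ = c + w := ⟨2 ^ k₀ - c, by omega⟩
  have hσ : (w : ℝ) / (c + w) < 1 := by rw [div_lt_one (by positivity)]; linarith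
  obtain ⟨t, ht⟩ : ∃ t, a < Fintype.card P / c * (1 - ((w : ℝ) / (c + w)) ^ t) := by
    have := ((tendsto_pow_atTop_nhds_zero_of_lt_one (by positivity) hσ).const_sub 1).const_mul
      ((Fintype.card P : ℝ) / c)
    rw [sub_zero, mul_one] at this
    exact (this.eventually (lt_mem_nhds ha)).exists
  obtain ⟨k, l, hl, hl', rfl, hk⟩ := exists_list_two_pow_le hf₀ t
  rw [hc₀, pow_mul, hw, Nat.add_sub_cancel_left] at hk
  refine ⟨_, l, hl, hl', ht.trans_le ?_⟩
  have hk' : ((c + w : ℝ)) ^ t ≤ c * l.length + w ^ t := by exact_mod_cast hk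
  rw [pow_mul, show (2 : ℝ) ^ k₀ = c + w by exact_mod_cast hw, div_pow,
    show Fintype.card P / c * (1 - (w : ℝ) ^ t / (c + w) ^ t) =
      (Fintype.card P * ((c + w) ^ t - w ^ t)) / (c * (c + w) ^ t : ℝ) by field_simp,
    show (Fintype.card P * l.length / (c + w) ^ t : ℝ) =
      Fintype.card P * (c * l.length) / (c * (c + w) ^ t) by field_simp]
  gcongr
  linarith

theorem eventually_lt_paStar_div {a : ℝ} (ha : a < (Fintype.card P : ℝ) / closureNumStar P) :
    ∀ᶠ n : ℕ in atTop, a < (PaStar P n : ℝ) / n.choose (n / 2) := by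
  obtain ⟨k, l, hl, hl', hlt⟩ := exists_list_lt_card_mul_div_two_pow ha
  set L := l.length
  have hz : Tendsto (fun n : ℕ => (n - k) / 2 - L) atTop atTop :=
    tendsto_atTop_atTop.2 fun b => ⟨k + 2 * (b + L), fun n hn => by omega⟩
  have hlim := (((tendsto_natCast_div_add_atTop (2 * L + 1 : ℝ)).comp hz).pow L).const_mul
    (Fintype.card P * L / 2 ^ k : ℝ)
  rw [one_pow, mul_one] at hlim
  filter_upwards [hlim.eventually (lt_mem_nhds hlt), eventually_ge_atTop (k + 2 * L)] with n hn' hn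
  obtain ⟨m, rfl⟩ : ∃ m, n = k + m := ⟨n - k, by omega⟩
  refine hn'.trans_le ?_
  simpa using mul_div_pow_le_paStar_div hl hl' (m := m) (by omega)

end LowerBound

/-- Main Theorem 2. For every finite poset `P`,
`Pa*(n, P) / C(n, ⌊n/2⌋) → |P| / c*(P)` as `n → ∞`. -/
theorem paStar_asymptotics (P : Type*) [PartialOrder P] [Fintype P] :
    Filter.Tendsto (fun n : ℕ => (PaStar P n : ℝ) / (n.choose (n / 2)))
      Filter.atTop (nhds ((Fintype.card P : ℝ) / (closureNumStar P : ℝ))) := by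
  rcases isEmpty_or_nonempty P with hP | hP
  · simp [paStar_of_isEmpty]
  · exact tendsto_order.2 ⟨fun a ha => eventually_lt_paStar_div ha,
      fun b hb => eventually_paStar_div_lt hb⟩
end

section
/- Let A ⊆ B be subsets of [n]. Then the number of full chains in B_n that intersect the interval [A, B] = {S : A ⊆ S ⊆ B} equals n! / C(n − |B \ A|, |A|). -/
/-!
Listing the elements of `[n]` in the order `σ⁻¹ 0, σ⁻¹ 1, …` is a bijection between permutations
and full chains, and the chain of `σ` meets `[A, B]` exactly when `σ` ranks all of `A` below all of
`Bᶜ`. Let `S = A ∪ Bᶜ` and `k = |A|`. Every permutation ranks exactly one `k`-subset `T` of `S`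
below `S \ T`, and relabelling by a permutation of `S` carrying `T` to `A` shows that each of these
`C(|S|, k)` classes has the same size. Hence the good permutations number `n! / C(|S|, k)`, and
`|S| = n - |B \ A|`.
-/

/-- A full (maximal) chain in `B_n`, recorded as the function assigning to each
`i ∈ {0, …, n}` the subset of size `i` belonging to the chain. -/
def IsFullChain {n : ℕ} (c : Fin (n+1) → Finset (Fin n)) : Prop :=
  (∀ i : Fin (n+1), (c i).card = (i : ℕ)) ∧ ∀ i j : Fin (n+1), i ≤ j → c i ⊆ c j

open scoped Classical in
/-- The number of full chains of `B_n` that contain at least one member of `F`. -/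
noncomputable def chainCount {n : ℕ} (F : Finset (Finset (Fin n))) : ℕ :=
  (Finset.univ.filter (fun c : Fin (n+1) → Finset (Fin n) =>
    IsFullChain c ∧ ∃ i, c i ∈ F)).card

open Finset Equiv Function

namespace Finset

variable {α β : Type*} [DecidableEq α] [LinearOrder β]

theorem exists_subset_card_eq_forall_lt {f : α → β} (hf : Injective f) (S : Finset α) {k : ℕ}
    (hk : k ≤ #S) : ∃ T ⊆ S, #T = k ∧ ∀ t ∈ T, ∀ u ∈ S \ T, f t < f u := by
  induction k with
  | zero => exact ⟨∅, empty_subset S, card_empty, by simp⟩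
  | succ k ih =>
    obtain ⟨T, hTS, hTk, hlt⟩ := ih (by omega)
    have hne : (S \ T).Nonempty := by rw [← card_pos, card_sdiff_of_subset hTS]; omega
    obtain ⟨u, hu, hmin⟩ := exists_min_image (S \ T) f hne
    obtain ⟨huS, huT⟩ := mem_sdiff.1 hu
    refine ⟨insert u T, insert_subset huS hTS, by rw [card_insert_of_notMem huT, hTk], ?_⟩
    intro t ht v hv
    obtain ⟨hvS, hvT⟩ := mem_sdiff.1 hv
    have hvST : v ∈ S \ T := mem_sdiff.2 ⟨hvS, fun h => hvT (mem_insert_of_mem h)⟩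
    rcases mem_insert.1 ht with rfl | ht
    · exact (hmin v hvST).lt_of_ne (hf.ne fun h => hvT (h ▸ mem_insert_self _ _))
    · exact hlt t ht v hvST

theorem eq_of_forall_lt_of_forall_lt {f : α → β} {S T T' : Finset α} (hcard : #T = #T')
    (hT : T ⊆ S) (hT' : T' ⊆ S) (h : ∀ t ∈ T, ∀ u ∈ S \ T, f t < f u)
    (h' : ∀ t ∈ T', ∀ u ∈ S \ T', f t < f u) : T = T' := by
  by_contra hne
  obtain ⟨t, ht, htT'⟩ := not_subset.1 fun hs => hne (eq_of_subset_of_card_le hs hcard.ge)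
  obtain ⟨t', ht', ht'T⟩ := not_subset.1 fun hs => hne (eq_of_subset_of_card_le hs hcard.le).symm
  exact lt_asymm (h t ht t' (mem_sdiff.2 ⟨hT' ht', ht'T⟩)) (h' t' ht' t (mem_sdiff.2 ⟨hT ht, htT'⟩))

end Finset

namespace Equiv.Perm

variable {α : Type*} [DecidableEq α]

theorem exists_image_eq_of_subset {S T A : Finset α} (hT : T ⊆ S) (hA : A ⊆ S) (h : #T = #A) :
    ∃ π : Perm α, T.image π = A ∧ S.image π = S := by
  have hsub : ∀ {U : Finset α}, U ⊆ S → #(U.subtype (· ∈ S)) = #U := fun hU => by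
    rw [card_subtype, filter_true_of_mem hU]
  obtain ⟨ρ, hρ⟩ := (Set.powersetCard.isPretransitive (α := S) (n := #A)).exists_smul_eq
    ⟨T.subtype (· ∈ S), (hsub hT).trans h⟩ ⟨A.subtype (· ∈ S), hsub hA⟩
  replace hρ : (T.subtype (· ∈ S)).image ρ = A.subtype (· ∈ S) := by
    simpa [Subtype.ext_iff, Finset.smul_finset_def] using hρ
  refine ⟨ofSubtype ρ, ?_, ?_⟩
  · rw [← subtype_map_of_mem hT, ← subtype_map_of_mem hA, ← hρ]
    simp only [map_eq_image, image_image]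
    exact image_congr fun x _ => ofSubtype_apply_coe ρ x
  · refine eq_of_subset_of_card_le (fun y hy => ?_)
      (card_image_of_injective _ (ofSubtype ρ).injective).ge
    obtain ⟨x, hx, rfl⟩ := mem_image.1 hy
    exact (ofSubtype_apply_mem_iff_mem ρ x).2 hx

end Equiv.Perm

section PermsPlacingBefore

variable {α : Type*} [Fintype α] [LinearOrder α]

def permsPlacingBefore (s t : Finset α) : Finset (Perm α) := {σ | ∀ a ∈ s, ∀ b ∈ t, σ a < σ b}

theorem mem_permsPlacingBefore {s t : Finset α} {σ : Perm α} :
    σ ∈ permsPlacingBefore s t ↔ ∀ a ∈ s, ∀ b ∈ t, σ a < σ b := by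
  simp [permsPlacingBefore]

theorem card_permsPlacingBefore_image (π : Perm α) (s t : Finset α) :
    #(permsPlacingBefore (s.image π) (t.image π)) = #(permsPlacingBefore s t) :=
  card_nbij' (· * π) (· * π⁻¹)
    (fun σ hσ => by simpa [mem_permsPlacingBefore] using hσ)
    (fun σ hσ => by simpa [mem_permsPlacingBefore] using hσ)
    (fun σ _ => mul_inv_cancel_right σ π) (fun σ _ => inv_mul_cancel_right σ π)

theorem card_permsPlacingBefore_mul_choose {A C : Finset α} (h : Disjoint A C) :
    #(permsPlacingBefore A C) * (#A + #C).choose #A = (Fintype.card α).factorial := by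
  set S := A ∪ C with hS
  have hclass : ∀ T ∈ powersetCard #A S,
      #(permsPlacingBefore T (S \ T)) = #(permsPlacingBefore A C) := by
    intro T hT
    obtain ⟨hTS, hTA⟩ := mem_powersetCard.1 hT
    obtain ⟨π, hπT, hπS⟩ := Perm.exists_image_eq_of_subset hTS subset_union_left hTA
    rw [← card_permsPlacingBefore_image π, image_sdiff _ _ π.injective, hπT, hπS,
      union_sdiff_cancel_left h]
  have hcover : (powersetCard #A S).biUnion (fun T => permsPlacingBefore T (S \ T)) = univ := by
    refine eq_univ_of_forall fun σ => ?_
    obtain ⟨T, hTS, hTA, hlt⟩ := exists_subset_card_eq_forall_lt σ.injective S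
      (k := #A) (card_le_card subset_union_left)
    exact mem_biUnion.2 ⟨T, mem_powersetCard.2 ⟨hTS, hTA⟩, mem_permsPlacingBefore.2 hlt⟩
  have hdisj : (powersetCard #A S : Set (Finset α)).PairwiseDisjoint
      (fun T => permsPlacingBefore T (S \ T)) := by
    intro T hT T' hT' hne
    obtain ⟨hTS, hTA⟩ := mem_powersetCard.1 hT
    obtain ⟨hT'S, hT'A⟩ := mem_powersetCard.1 hT'
    refine disjoint_left.2 fun σ hσ hσ' => hne ?_
    exact eq_of_forall_lt_of_forall_lt (hTA.trans hT'A.symm) hTS hT'S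
      (mem_permsPlacingBefore.1 hσ) (mem_permsPlacingBefore.1 hσ')
  calc #(permsPlacingBefore A C) * (#A + #C).choose #A
      = ∑ T ∈ powersetCard #A S, #(permsPlacingBefore T (S \ T)) := by
        rw [sum_congr rfl hclass, sum_const, card_powersetCard, hS, card_union_of_disjoint h,
          smul_eq_mul, mul_comm]
    _ = (Fintype.card α).factorial := by
        rw [← card_biUnion hdisj, hcover, card_univ, Fintype.card_perm]

end PermsPlacingBefore

namespace Fin

variable {m n : ℕ}

theorem mem_iff_lt_card_of_isLowerSet {D : Finset (Fin m)} (hD : IsLowerSet (D : Set (Fin m)))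
    (i : Fin m) : i ∈ D ↔ (i : ℕ) < #D := by
  constructor
  · intro hi
    have := card_le_card fun j hj => hD (mem_Iic.1 hj) hi
    rwa [card_Iic] at this
  · intro hi
    by_contra hiD
    have := card_le_card fun j (hj : j ∈ D) => mem_Iio.2 (lt_of_not_ge fun hij => hiD (hD hij hj))
    rw [card_Iio] at this
    omega

theorem surjective_of_card_filter_val_lt {f : Fin n → Fin n}
    (h : ∀ i : Fin (n + 1), #{x | (f x : ℕ) < i} = i) : Surjective f := by
  intro j
  have hlt : #{x | (f x : ℕ) < j} < #{x | (f x : ℕ) < j + 1} := by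
    have h₁ := h j.castSucc
    have h₂ := h j.succ
    simp only [Fin.val_castSucc, Fin.val_succ] at h₁ h₂
    omega
  obtain ⟨x, hx, hx'⟩ := exists_mem_notMem_of_card_lt_card hlt
  simp only [mem_filter, mem_univ, true_and, not_lt] at hx hx'
  exact ⟨x, Fin.ext (by omega)⟩

end Fin

variable {n : ℕ}

def permChain (σ : Perm (Fin n)) (i : Fin (n + 1)) : Finset (Fin n) := {x | (σ x : ℕ) < i}

theorem mem_permChain {σ : Perm (Fin n)} {i : Fin (n + 1)} {x : Fin n} :
    x ∈ permChain σ i ↔ (σ x : ℕ) < i := by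
  simp [permChain]

theorem card_permChain (σ : Perm (Fin n)) (i : Fin (n + 1)) : #(permChain σ i) = i := by
  have : permChain σ i = ({y | (y : ℕ) < i} : Finset (Fin n)).map σ.symm.toEmbedding := by
    ext x
    simp [mem_permChain]
  rw [this, card_map, Fin.card_filter_val_lt, min_eq_right (by omega)]

theorem isFullChain_permChain (σ : Perm (Fin n)) : IsFullChain (permChain σ) :=
  ⟨card_permChain σ, fun _ _ hij _ hx =>
    mem_permChain.2 ((mem_permChain.1 hx).trans_le (Fin.le_def.1 hij))⟩

theorem permChain_injective : Injective (permChain (n := n)) := by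
  intro σ τ h
  ext x
  have key : ∀ i : Fin (n + 1), (σ x : ℕ) < i ↔ (τ x : ℕ) < i := fun i => by
    rw [← mem_permChain, ← mem_permChain, h]
  have h₁ := key ⟨σ x + 1, by omega⟩
  have h₂ := key ⟨τ x + 1, by omega⟩
  simp only at h₁ h₂
  omega

theorem IsFullChain.exists_permChain_eq {c : Fin (n + 1) → Finset (Fin n)} (hc : IsFullChain c) :
    ∃ σ, permChain σ = c := by
  obtain ⟨hcard, hmono⟩ := hc
  -- `{j | x ∉ c j}` is an initial segment of `Fin (n + 1)`, so its size is where `x` enters `c`.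
  have hmem : ∀ x i, x ∈ c i ↔ #{j | x ∉ c j} ≤ (i : ℕ) := fun x i => by
    rw [← not_lt, ← Fin.mem_iff_lt_card_of_isLowerSet
      fun j k hkj hj => by simpa using fun hk => (mem_filter.1 hj).2 (hmono k j hkj hk)]
    simp
  have hpos : ∀ x, 0 < #{j | x ∉ c j} := fun x => by
    have : x ∉ c 0 := by simp [card_eq_zero.1 (by simpa using hcard 0)]
    rw [hmem] at this
    omega
  have hle : ∀ x, #{j | x ∉ c j} ≤ n := fun x => by
    have := (hmem x (Fin.last n)).1 (by simp [eq_univ_of_card (c (Fin.last n)) (by simp [hcard])])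
    simpa using this
  let f : Fin n → Fin n := fun x => ⟨#{j | x ∉ c j} - 1, by have := hle x; have := hpos x; omega⟩
  have hf : ∀ i x, x ∈ c i ↔ (f x : ℕ) < i := fun i x => by
    rw [hmem]; have := hpos x; simp only [f]; omega
  have hsurj : Surjective f := Fin.surjective_of_card_filter_val_lt fun i => by
    have : ({x | (f x : ℕ) < i} : Finset (Fin n)) = c i := by ext x; simp [hf]
    rw [this, hcard]
  refine ⟨Equiv.ofBijective f ⟨Finite.injective_iff_surjective.2 hsurj, hsurj⟩, ?_⟩
  funext i
  ext x
  exact mem_permChain.trans (hf i x).symm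

theorem exists_permChain_mem_Icc_iff (σ : Perm (Fin n)) (A B : Finset (Fin n)) :
    (∃ i, permChain σ i ∈ Icc A B) ↔ ∀ a ∈ A, ∀ b ∈ Bᶜ, σ a < σ b := by
  simp only [mem_Icc, subset_iff, mem_permChain, mem_compl, Fin.lt_def]
  constructor
  · rintro ⟨i, hA, hB⟩ a ha b hb
    have := hA ha
    have := mt (@hB b) hb
    omega
  · intro h
    let r : Fin n → ℕ := fun a => σ a + 1
    have hr : A.sup r < n + 1 := Nat.lt_succ_of_le (Finset.sup_le fun a _ => (σ a).isLt)
    refine ⟨⟨A.sup r, hr⟩, fun a ha => (Nat.lt_succ_self _).trans_le (le_sup (f := r) ha),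
      fun x hx => ?_⟩
    by_contra hxB
    obtain ⟨a, ha, hxa⟩ := Finset.lt_sup_iff.1 hx
    have : (σ x : ℕ) < σ a + 1 := hxa
    have := h a ha x hxB
    omega

theorem chainCount_Icc (A B : Finset (Fin n)) :
    chainCount (Icc A B) = #(permsPlacingBefore A Bᶜ) := by
  rw [chainCount, ← card_map ⟨_, permChain_injective⟩]
  congr 1
  ext c
  simp only [mem_filter, mem_univ, true_and, mem_map, Embedding.coeFn_mk]
  constructor
  · rintro ⟨hc, hmeet⟩
    obtain ⟨σ, rfl⟩ := hc.exists_permChain_eq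
    exact ⟨σ, mem_permsPlacingBefore.2 ((exists_permChain_mem_Icc_iff σ A B).1 hmeet), rfl⟩
  · rintro ⟨σ, hσ, rfl⟩
    exact ⟨isFullChain_permChain σ,
      (exists_permChain_mem_Icc_iff σ A B).2 (mem_permsPlacingBefore.1 hσ)⟩

/-- For `A ⊆ B ⊆ [n]`, the number of full chains of `B_n` meeting
the interval `[A, B] = {S : A ⊆ S ⊆ B}` equals `n! / C(n − |B \ A|, |A|)`. -/
theorem chainCount_interval (n : ℕ) (A B : Finset (Fin n)) (hAB : A ⊆ B) :
    (chainCount (Finset.Icc A B) : ℝ) =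
      (n.factorial : ℝ) / ((n - (B \ A).card).choose A.card : ℝ) := by
  have hdisj : Disjoint A Bᶜ := disjoint_compl_right.mono_left hAB
  have hsize : #A + #Bᶜ = n - #(B \ A) := by
    have := card_le_card hAB
    have := card_le_univ B
    rw [card_compl, card_sdiff_of_subset hAB]
    simp only [Fintype.card_fin] at *
    omega
  have hcount := card_permsPlacingBefore_mul_choose hdisj
  rw [hsize, Fintype.card_fin] at hcount
  have hpos : 0 < (n - #(B \ A)).choose #A := Nat.choose_pos (by omega)
  rw [chainCount_Icc, eq_div_iff (by positivity)]
  exact_mod_cast hcount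
end
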